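/- For every ν > 0, I(ν) = ψ₁(ν/2) − ψ₁((ν+1)/2) − 2(ν+5)/(ν(ν+1)(ν+3)) > 0; in particular the Jeffreys-type prior density I(ν)^{1/2} for the degrees of freedom of the Student-t regression model is well defined and strictly positive on (0,∞). -/
import Mathlib


/-- The trigamma function `ψ₁(x) = ∑_{n=0}^∞ 1/(x+n)²`. -/
noncomputable def trigamma (x : ℝ) : ℝ := ∑' n : ℕ, 1 / (x + n) ^ 2

/-- The Fisher information for the degrees of freedom of the Student-t model
(per observation, up to the factor `n/4`). -/
noncomputable def fisherNu (ν : ℝ) : ℝ :=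
  trigamma (ν / 2) - trigamma ((ν + 1) / 2) - 2 * (ν + 5) / (ν * (ν + 1) * (ν + 3))

/-- The rational telescoping comparison function. -/
noncomputable def Fr (m : ℝ) : ℝ := 2 * (m + 5) / (m * (m + 1) * (m + 3))

lemma Fr_diff_eq (m : ℝ) (hm : 0 < m) :
    Fr m - Fr (m + 2) =
      (8*m^2 + 76*m + 100) / (m*(m+1)*(m+2)*(m+3)*(m+5)) := by
  have h0 : m ≠ 0 := hm.ne'
  have h1 : m + 1 ≠ 0 := by positivity
  have h2 : m + 2 ≠ 0 := by positivity
  have h3 : m + 3 ≠ 0 := by positivity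
  have h5 : m + 5 ≠ 0 := by positivity
  unfold Fr
  rw [show m + 2 + 1 = m + 3 by ring, show m + 2 + 3 = m + 5 by ring]
  field_simp
  ring

lemma Fr_diff_nonneg (m : ℝ) (hm : 0 < m) : 0 ≤ Fr m - Fr (m + 2) := by
  rw [Fr_diff_eq m hm]; positivity

lemma key_diff_eq (m : ℝ) (hm : 0 < m) :
    (4/m^2 - 4/(m+1)^2) - (Fr m - Fr (m + 2)) =
      (112*m^2 + 264*m + 120) / (m^2*(m+1)^2*(m+2)*(m+3)*(m+5)) := by
  have h0 : m ≠ 0 := hm.ne'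
  have h1 : m + 1 ≠ 0 := by positivity
  have h2 : m + 2 ≠ 0 := by positivity
  have h3 : m + 3 ≠ 0 := by positivity
  have h5 : m + 5 ≠ 0 := by positivity
  unfold Fr
  rw [show m + 2 + 1 = m + 3 by ring, show m + 2 + 3 = m + 5 by ring]
  field_simp
  ring

lemma key_diff_pos (m : ℝ) (hm : 0 < m) :
    0 < (4/m^2 - 4/(m+1)^2) - (Fr m - Fr (m + 2)) := by
  rw [key_diff_eq m hm]; positivity

lemma summable_inv_sq (x : ℝ) (hx : 0 < x) :
    Summable (fun n : ℕ => 1 / (x + n) ^ 2) := by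
  rw [← summable_nat_add_iff 1]
  have hbase : Summable (fun n : ℕ => 1 / ((n : ℝ) + 1) ^ 2) := by
    have h : Summable (fun n : ℕ => 1 / (n : ℝ) ^ 2) :=
      Real.summable_one_div_nat_pow.mpr (by norm_num)
    have h2 := (summable_nat_add_iff (f := fun n : ℕ => 1 / (n : ℝ) ^ 2) 1).mpr h
    refine h2.congr fun n => ?_
    push_cast
    ring_nf
  refine Summable.of_nonneg_of_le (fun n => by positivity) (fun n => ?_) hbase
  have h1 : (0:ℝ) < (n : ℝ) + 1 := by positivity
  apply one_div_le_one_div_of_le (by positivity)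
  have h2 : (n : ℝ) + 1 ≤ x + ((n : ℕ) + 1 : ℕ) := by push_cast; linarith
  calc ((n:ℝ) + 1) ^ 2 ≤ (x + ((n:ℕ) + 1 : ℕ)) ^ 2 := by
        apply pow_le_pow_left₀ h1.le h2
    _ = _ := rfl

lemma summable_shift2 (x : ℝ) (hx : 0 < x) :
    Summable (fun n : ℕ => 4 / (x + 2 * n) ^ 2) := by
  have h : Summable (fun n : ℕ => 4 * (1 / (x + n) ^ 2)) :=
    (summable_inv_sq x hx).mul_left 4
  refine Summable.of_nonneg_of_le (fun n => by positivity) (fun n => ?_) h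
  rw [mul_one_div]
  have hn : (0:ℝ) ≤ (n:ℝ) := Nat.cast_nonneg n
  rw [div_le_div_iff₀ (by positivity) (by positivity)]
  nlinarith [sq_nonneg ((n:ℝ)), hx.le]

lemma summable_shift2' (x : ℝ) (hx : 0 < x) :
    Summable (fun n : ℕ => 4 / (x + 2 * n + 1) ^ 2) := by
  have h : Summable (fun n : ℕ => 4 * (1 / (x + n) ^ 2)) :=
    (summable_inv_sq x hx).mul_left 4
  refine Summable.of_nonneg_of_le (fun n => by positivity) (fun n => ?_) h
  rw [mul_one_div]
  have hn : (0:ℝ) ≤ (n:ℝ) := Nat.cast_nonneg n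
  rw [div_le_div_iff₀ (by positivity) (by positivity)]
  nlinarith [sq_nonneg ((n:ℝ)), hx.le]

lemma trigamma_half (ν : ℝ) (hν : 0 < ν) :
    trigamma (ν / 2) = ∑' n : ℕ, 4 / (ν + 2 * n) ^ 2 := by
  unfold trigamma
  refine tsum_congr fun n => ?_
  have h : ν + 2 * (n : ℝ) ≠ 0 := by positivity
  have h2 : ν / 2 + (n : ℝ) ≠ 0 := by positivity
  field_simp
  ring

lemma trigamma_half' (ν : ℝ) (hν : 0 < ν) :
    trigamma ((ν + 1) / 2) = ∑' n : ℕ, 4 / (ν + 2 * n + 1) ^ 2 := by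
  unfold trigamma
  refine tsum_congr fun n => ?_
  have h : ν + 2 * (n : ℝ) + 1 ≠ 0 := by positivity
  have h2 : (ν + 1) / 2 + (n : ℝ) ≠ 0 := by positivity
  field_simp
  ring

lemma tendsto_Fr (ν : ℝ) (hν : 0 < ν) :
    Filter.Tendsto (fun n : ℕ => Fr (ν + 2 * n)) Filter.atTop (nhds 0) := by
  have hbound : ∀ n : ℕ, Fr (ν + 2 * n) ≤ 10 / (ν + 2 * n) := by
    intro n
    have hm0 : (0:ℝ) < ν + 2 * n := by positivity
    unfold Fr
    rw [div_le_div_iff₀ (by positivity) hm0]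
    nlinarith [sq_nonneg (ν + 2 * (n:ℝ)), hm0.le]
  have hnonneg : ∀ n : ℕ, 0 ≤ Fr (ν + 2 * n) := by
    intro n
    have : (0:ℝ) < ν + 2 * n := by positivity
    unfold Fr
    positivity
  have h2n : Filter.Tendsto (fun n : ℕ => ν + 2 * (n:ℝ)) Filter.atTop Filter.atTop := by
    apply Filter.tendsto_atTop_add_const_left
    exact Filter.Tendsto.const_mul_atTop (by norm_num) tendsto_natCast_atTop_atTop
  have htend : Filter.Tendsto (fun n : ℕ => 10 / (ν + 2 * (n:ℝ))) Filter.atTop (nhds 0) :=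
    Filter.Tendsto.div_atTop tendsto_const_nhds h2n
  exact squeeze_zero hnonneg hbound htend

theorem fisherNu_pos (ν : ℝ) (hν : 0 < ν) :
    0 < fisherNu ν ∧ 0 < Real.sqrt (fisherNu ν) := by
  have hmpos : ∀ n : ℕ, (0:ℝ) < ν + 2 * n := fun n => by positivity
  set t : ℕ → ℝ := fun n => 4/(ν+2*n)^2 - 4/(ν+2*n+1)^2 with ht
  set d : ℕ → ℝ := fun n => Fr (ν+2*n) - Fr (ν+2*n+2) with hd
  have hsum1 : Summable (fun n : ℕ => 4/(ν+2*n)^2) := summable_shift2 ν hν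
  have hsum2 : Summable (fun n : ℕ => 4/(ν+2*n+1)^2) := summable_shift2' ν hν
  have hsumt : Summable t := hsum1.sub hsum2
  have hdnonneg : ∀ n, 0 ≤ d n := fun n => Fr_diff_nonneg (ν+2*n) (hmpos n)
  have hkey : ∀ n, 0 < t n - d n := fun n => key_diff_pos (ν+2*n) (hmpos n)
  have hdle : ∀ n, d n ≤ t n := fun n => by linarith [hkey n]
  have hsumd : Summable d := Summable.of_nonneg_of_le hdnonneg hdle hsumt
  have hdG : ∀ n : ℕ, d n = Fr (ν + 2*n) - Fr (ν + 2*(n+1 : ℕ)) := by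
    intro n
    have : ν + 2*((n:ℝ)+1) = ν + 2*n + 2 := by ring
    simp only [hd, Nat.cast_add, Nat.cast_one, this]
  have hG : HasSum d (Fr ν) := by
    rw [hasSum_iff_tendsto_nat_of_nonneg hdnonneg]
    have hps : ∀ N : ℕ, ∑ n ∈ Finset.range N, d n = Fr ν - Fr (ν + 2*N) := by
      intro N
      rw [Finset.sum_congr rfl (fun n _ => hdG n),
        Finset.sum_range_sub' (fun n : ℕ => Fr (ν + 2*n)) N]
      norm_num
    simp only [hps]
    have := tendsto_const_nhds (x := Fr ν) (f := Filter.atTop (α := ℕ)) |>.sub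
      (tendsto_Fr ν hν)
    simpa using this
  have hib : trigamma (ν/2) - trigamma ((ν+1)/2) = ∑' n, t n := by
    rw [trigamma_half ν hν, trigamma_half' ν hν, ht]
    exact (Summable.tsum_sub hsum1 hsum2).symm
  have hrat : 2 * (ν + 5) / (ν * (ν + 1) * (ν + 3)) = Fr ν := rfl
  have hfi : fisherNu ν = ∑' n, (t n - d n) := by
    unfold fisherNu
    rw [hib, hrat, ← hG.tsum_eq, ← Summable.tsum_sub hsumt hsumd]
  have hpos : 0 < fisherNu ν := by
    rw [hfi]
    exact Summable.tsum_pos (hsumt.sub hsumd) (fun n => (hkey n).le) 0 (hkey 0)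
  exact ⟨hpos, Real.sqrt_pos.mpr hpos⟩
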